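/- Let P : ℂⁿ → ℂ be an m-homogeneous polynomial, i ∈ {1,...,n}^m, and 2 ≤ k ≤ m. If max{i₁,...,i_{k−1}} ≤ i_k, then c_i(S_{k−1} L_P) = (k / |{1 ≤ u ≤ k : i_u = i_k}|) · c_i(S_k L_P); otherwise c_i(S_{k−1} L_P) = 0. -/

import Mathlib

/-- The (non-symmetric) `m`-form associated to a coefficient array `c`
(supported on nondecreasing multi-indices). -/
noncomputable def LP (n m : ℕ) (c : (Fin m → Fin n) → ℂ) : (Fin m → (Fin n → ℂ)) → ℂ :=
  fun x => ∑ j : Fin m → Fin n, c j * ∏ k : Fin m, x k (j k)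

/-- Partial symmetrization over the first `k` arguments. -/
noncomputable def partialSym (n m k : ℕ) (L : (Fin m → (Fin n → ℂ)) → ℂ) :
    (Fin m → (Fin n → ℂ)) → ℂ :=
  fun x => (Nat.factorial k : ℂ)⁻¹ *
    ∑ σ ∈ Finset.univ.filter
        (fun σ : Equiv.Perm (Fin m) => ∀ i : Fin m, k ≤ (i : ℕ) → σ i = i),
      L (fun u => x (σ u))

/-- The coefficient `c_i(L) = L(e_{i₁},…,e_{i_m})` of an `m`-form. -/
noncomputable def coeff (n m : ℕ) (L : (Fin m → (Fin n → ℂ)) → ℂ) (i : Fin m → Fin n) : ℂ :=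
  L (fun k => Pi.single (i k) 1)

/-!
Evaluating at unit vectors gives `c_i(S_K L_P) = (K!)⁻¹ ∑_{σ ∈ Σ_K} c_{i ∘ σ}`, where `Σ_K` is the
group of permutations fixing every position `≥ K`, and `c_j` vanishes unless `j` is monotone.
With `p = k - 1` (positions are `0`-indexed): if some `i_u` with `u < p` exceeds `i_p`, then `i ∘ σ` takes the value `i_u`
before position `p` and `i_p` at `p` for every `σ ∈ Σ_p`, so all terms vanish.
Otherwise write each `σ ∈ Σ_{p+1}` uniquely as `swap a p * τ` with `a ≤ p` and `τ ∈ Σ_p`: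
when `i_a = i_p` the swap does not change `i`, so the term is `c_{i ∘ τ}`, and when `i_a < i_p`
the index `i ∘ σ` is not monotone. Hence `∑_{Σ_{p+1}} = |{a ≤ p : i_a = i_p}| · ∑_{Σ_p}`.
-/

open Finset Equiv

namespace Equiv.Perm

variable {α : Type*} [LinearOrder α] {σ : Perm α} {p u : α}

theorem apply_le_of_forall_lt_imp_apply_eq (hσ : ∀ w, p < w → σ w = w) (hu : u ≤ p) :
    σ u ≤ p := by
  by_contra! h
  have hfix : σ u = u := σ.injective (hσ _ h)
  exact absurd (hfix ▸ h) hu.not_gt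

theorem symm_apply_le_of_forall_lt_imp_apply_eq (hσ : ∀ w, p < w → σ w = w) (hu : u ≤ p) :
    σ.symm u ≤ p :=
  apply_le_of_forall_lt_imp_apply_eq (fun w hw => (symm_apply_eq σ).2 (hσ w hw).symm) hu

theorem not_monotone_comp {β : Type*} [Preorder β] {i : α → β}
    (hσ : ∀ w, p < w → σ w = w) (hu : u ≤ p) (hlt : i (σ p) < i u) : ¬ Monotone (i ∘ σ) :=
  fun hmono => by
    have h := hmono (symm_apply_le_of_forall_lt_imp_apply_eq hσ hu)
    rw [Function.comp_apply, apply_symm_apply] at h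
    exact h.not_gt hlt

end Equiv.Perm

theorem Equiv.comp_swap_eq_self {α β : Type*} [DecidableEq α] {i : α → β} {a b : α}
    (h : i a = i b) : i ∘ swap a b = i := by
  rw [comp_swap_eq_update, h, Function.update_eq_self, ← h, Function.update_eq_self]

def permsFixingFrom (m K : ℕ) : Finset (Perm (Fin m)) :=
  univ.filter fun σ => ∀ u : Fin m, K ≤ (u : ℕ) → σ u = u

variable {n m : ℕ}

theorem mem_permsFixingFrom {K : ℕ} {σ : Perm (Fin m)} :
    σ ∈ permsFixingFrom m K ↔ ∀ u : Fin m, K ≤ (u : ℕ) → σ u = u := by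
  simp [permsFixingFrom]

theorem mem_permsFixingFrom_succ {p : Fin m} {σ : Perm (Fin m)} :
    σ ∈ permsFixingFrom m (p + 1) ↔ ∀ w, p < w → σ w = w := by
  simp only [mem_permsFixingFrom, Nat.succ_le_iff, Fin.lt_def]

theorem sum_permsFixingFrom_succ {M : Type*} [AddCommMonoid M] (p : Fin m)
    (g : Perm (Fin m) → M) :
    ∑ σ ∈ permsFixingFrom m (p + 1), g σ =
      ∑ a ∈ Iic p, ∑ τ ∈ permsFixingFrom m p, g (swap a p * τ) := by
  rw [← sum_product']
  refine sum_nbij' (fun σ => (σ p, swap (σ p) p * σ)) (fun aτ => swap aτ.1 p * aτ.2)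
    ?_ ?_ ?_ ?_ ?_
  · intro σ hσ
    rw [mem_permsFixingFrom_succ] at hσ
    have hσp : σ p ≤ p := Perm.apply_le_of_forall_lt_imp_apply_eq hσ le_rfl
    refine mem_product.2 ⟨mem_Iic.2 hσp, mem_permsFixingFrom.2 fun w hw => ?_⟩
    rcases (Fin.le_def.2 hw).eq_or_lt with rfl | hlt
    · simp
    · rw [Perm.mul_apply, hσ w hlt, swap_apply_of_ne_of_ne (hσp.trans_lt hlt).ne' hlt.ne']
  · rintro ⟨a, τ⟩ haτ
    obtain ⟨ha, hτ⟩ := mem_product.1 haτ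
    refine mem_permsFixingFrom_succ.2 fun w hw => ?_
    rw [Perm.mul_apply, (mem_permsFixingFrom.1 hτ) w (Fin.le_def.1 hw.le),
      swap_apply_of_ne_of_ne ((mem_Iic.1 ha).trans_lt hw).ne' hw.ne']
  · intro σ _
    exact swap_mul_self_mul _ _ _
  · rintro ⟨a, τ⟩ haτ
    have hτp : τ p = p := mem_permsFixingFrom.1 (mem_product.1 haτ).2 p le_rfl
    simp [hτp, swap_mul_self_mul]
  · intro σ _
    rw [swap_mul_self_mul]

theorem LP_apply_single (c : (Fin m → Fin n) → ℂ) (j : Fin m → Fin n) :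
    LP n m c (fun u => Pi.single (j u) 1) = c j := by
  rw [LP, sum_eq_single j]
  · simp
  · intro b _ hb
    obtain ⟨u, hu⟩ := Function.ne_iff.1 hb
    exact mul_eq_zero_of_right _ (prod_eq_zero (mem_univ u) (Pi.single_eq_of_ne hu 1))
  · simp

theorem coeff_partialSym_LP (K : ℕ) (c : (Fin m → Fin n) → ℂ) (i : Fin m → Fin n) :
    coeff n m (partialSym n m K (LP n m c)) i =
      (K.factorial : ℂ)⁻¹ * ∑ σ ∈ permsFixingFrom m K, c (i ∘ σ) := by
  simp only [coeff, partialSym]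
  congr 1
  exact sum_congr rfl fun σ _ => LP_apply_single c (i ∘ σ)

section

variable {β M : Type*} [AddCommMonoid M] {i : Fin m → β} {p : Fin m}

theorem sum_permsFixingFrom_comp_eq_zero [Preorder β] {f : (Fin m → β) → M}
    (hf : ∀ j, ¬ Monotone j → f j = 0) {u : Fin m} (hu : u < p) (hlt : i p < i u) :
    ∑ σ ∈ permsFixingFrom m p, f (i ∘ σ) = 0 := by
  refine sum_eq_zero fun σ hσ => hf _ ?_
  have hσfix : ∀ w, p < w → σ w = w := fun w hw => mem_permsFixingFrom.1 hσ w (Fin.le_def.1 hw.le)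
  have hσp : σ p = p := mem_permsFixingFrom.1 hσ p le_rfl
  exact Perm.not_monotone_comp hσfix hu.le (by rwa [hσp])

theorem sum_permsFixingFrom_succ_comp [PartialOrder β] [DecidableEq β] {f : (Fin m → β) → M}
    (hf : ∀ j, ¬ Monotone j → f j = 0) (hi : ∀ u < p, i u ≤ i p) :
    ∑ σ ∈ permsFixingFrom m (p + 1), f (i ∘ σ) =
      #{a ∈ Iic p | i a = i p} • ∑ τ ∈ permsFixingFrom m p, f (i ∘ τ) := by
  rw [sum_permsFixingFrom_succ, ← sum_const, sum_filter]
  refine sum_congr rfl fun a ha => ?_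
  split_ifs with hia
  · simp only [Perm.coe_mul, ← Function.comp_assoc, comp_swap_eq_self hia]
  · refine sum_eq_zero fun τ hτ => hf _ ?_
    have hap : i a < i p :=
      (hi a ((mem_Iic.1 ha).lt_of_ne (by rintro rfl; exact hia rfl))).lt_of_ne hia
    have hτp : τ p = p := mem_permsFixingFrom.1 hτ p le_rfl
    refine Perm.not_monotone_comp (u := p) (fun w hw => ?_) le_rfl (by simpa [hτp] using hap)
    rw [Perm.mul_apply, mem_permsFixingFrom.1 hτ w (Fin.le_def.1 hw.le),
      swap_apply_of_ne_of_ne ((mem_Iic.1 ha).trans_lt hw).ne' hw.ne']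

end

section

variable {c : (Fin m → Fin n) → ℂ} (hc : ∀ j, ¬ Monotone j → c j = 0) {i : Fin m → Fin n}
include hc

theorem coeff_partialSym_LP_eq_zero {p u : Fin m} (hu : u < p) (hlt : i p < i u) :
    coeff n m (partialSym n m p (LP n m c)) i = 0 := by
  rw [coeff_partialSym_LP, sum_permsFixingFrom_comp_eq_zero hc hu hlt, mul_zero]

theorem coeff_partialSym_LP_eq_mul_coeff_partialSym_succ {p : Fin m} (hi : ∀ u < p, i u ≤ i p) :
    coeff n m (partialSym n m p (LP n m c)) i =
      ((p + 1 : ℕ) : ℂ) / #{a ∈ Iic p | i a = i p} *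
        coeff n m (partialSym n m (p + 1) (LP n m c)) i := by
  have hS : (#{a ∈ Iic p | i a = i p} : ℂ) ≠ 0 :=
    Nat.cast_ne_zero.2 (card_ne_zero_of_mem (mem_filter.2 ⟨mem_Iic.2 le_rfl, rfl⟩))
  rw [coeff_partialSym_LP, coeff_partialSym_LP, sum_permsFixingFrom_succ_comp hc hi, nsmul_eq_mul,
    Nat.factorial_succ]
  push_cast
  field_simp

end

/-- For `2 ≤ k ≤ m` and `i ∈ {1,…,n}^m`: if `max{i₁,…,i_{k−1}} ≤ i_k` then
`c_i(S_{k−1} L_P) = (k / |{1 ≤ u ≤ k : i_u = i_k}|) · c_i(S_k L_P)`;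
otherwise `c_i(S_{k−1} L_P) = 0`. -/
theorem coeff_partialSym_step (n m k : ℕ) (hk2 : 2 ≤ k) (hkm : k ≤ m)
    (c : (Fin m → Fin n) → ℂ)
    (hc : ∀ j : Fin m → Fin n, ¬ Monotone j → c j = 0)
    (i : Fin m → Fin n) :
    (((∀ u : Fin m, (u : ℕ) < k - 1 → i u ≤ i ⟨k - 1, by omega⟩) →
      coeff n m (partialSym n m (k - 1) (LP n m c)) i =
        ((k : ℂ) /
          ((Finset.univ.filter fun u : Fin m =>
              (u : ℕ) < k ∧ i u = i ⟨k - 1, by omega⟩).card : ℂ)) *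
          coeff n m (partialSym n m k (LP n m c)) i) ∧
    ((¬ ∀ u : Fin m, (u : ℕ) < k - 1 → i u ≤ i ⟨k - 1, by omega⟩) →
      coeff n m (partialSym n m (k - 1) (LP n m c)) i = 0)) := by
  set p : Fin m := ⟨k - 1, by omega⟩
  have hk : (p : ℕ) + 1 = k := by simp only [p]; omega
  rw [show k - 1 = (p : ℕ) from rfl]
  have hS : #{u : Fin m | (u : ℕ) < k ∧ i u = i p} = #{a ∈ Iic p | i a = i p} := by
    congr 1
    ext u
    simp only [mem_filter, mem_univ, true_and, mem_Iic, Fin.le_def]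
    omega
  refine ⟨fun hi => ?_, fun hi => ?_⟩
  · rw [hS, ← hk]
    exact coeff_partialSym_LP_eq_mul_coeff_partialSym_succ hc hi
  · push Not at hi
    obtain ⟨u, hu, hlt⟩ := hi
    exact coeff_partialSym_LP_eq_zero hc hu hlt
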